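/- Let (C^•, d, δ) be a finite bi-graded complex of finite-dimensional complex vector spaces whose combinatorial Laplacian Δ_j is bijective for every j = 0, …, n. Then the torsion-type product of determinants satisfies ∏_{j=0}^{n} det(Δ_j)^{(−1)^{j+1} j} = ∏_{j=1}^{n} det(d_{j−1} ∘ δ_j |_{im d_{j−1}})^{(−1)^{j+1}}, where each composite d_{j−1} ∘ δ_j preserves the subspace im d_{j−1} ⊆ C^j. -/

import Mathlib

/-!
Write `T j` for the determinant of `d j ∘ δ j` on `im d j`. When `Δ (j + 1)` is bijective, the
relations `d ∘ d = 0` and `δ ∘ δ = 0` give the Hodge decomposition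
`C (j + 1) = im d j ⊕ im δ (j + 1)`, on whose summands `Δ (j + 1)` acts as `d j ∘ δ j` and as
`δ (j + 1) ∘ d (j + 1)`. The latter is conjugate, through the isomorphism
`d (j + 1) : im δ (j + 1) ≃ im d (j + 1)`, to `d (j + 1) ∘ δ (j + 1)` on `im d (j + 1)`. Hence
`det Δ (j + 1) = T j * T (j + 1)`, while `T n = 1` since `C (n + 1) = 0`, and the alternating
product telescopes.
-/

open LinearMap

namespace LinearMap

theorem det_eq_of_comp_linearEquiv_eq {R : Type*} [CommRing R] {M N : Type*} [AddCommGroup M]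
    [Module R M] [AddCommGroup N] [Module R N] (e : M ≃ₗ[R] N) {f : M →ₗ[R] M} {g : N →ₗ[R] N}
    (h : g ∘ₗ e = e ∘ₗ f) : LinearMap.det g = LinearMap.det f := by
  rw [← LinearMap.det_conj f e, ← comp_assoc, ← h]
  congr 1
  ext
  simp

variable {K M N : Type*} [Field K] [AddCommGroup M] [Module K M] [AddCommGroup N] [Module K N]

theorem det_eq_det_restrict_mul_det_restrict [FiniteDimensional K M] {p q : Submodule K M}
    (hpq : IsCompl p q) (f : M →ₗ[K] M) (hp : ∀ x ∈ p, f x ∈ p) (hq : ∀ x ∈ q, f x ∈ q) :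
    LinearMap.det f = LinearMap.det (f.restrict hp) * LinearMap.det (f.restrict hq) := by
  rw [← det_prodMap]
  refine det_eq_of_comp_linearEquiv_eq (Submodule.prodEquivOfIsCompl p q hpq) ?_
  ext ⟨x, y⟩ <;> simp

theorem det_restrict_comp_range_eq {f : M →ₗ[K] N} {g : N →ₗ[K] M}
    (hdisj : Disjoint (range g) (ker f)) (hrange : range (f ∘ₗ g) = range f)
    (hgf : ∀ x ∈ range g, (g ∘ₗ f) x ∈ range g) (hfg : ∀ y ∈ range f, (f ∘ₗ g) y ∈ range f) :
    LinearMap.det ((g ∘ₗ f).restrict hgf) = LinearMap.det ((f ∘ₗ g).restrict hfg) := by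
  let φ : range g →ₗ[K] range f := f.restrict fun x _ ↦ mem_range_self f x
  have hφ : Function.Bijective φ := by
    refine ⟨fun x y hxy ↦ ?_, fun ⟨y, hy⟩ ↦ ?_⟩
    · have hx : (x - y : M) ∈ range g ⊓ ker f :=
        ⟨sub_mem x.2 y.2, by simpa [φ, sub_eq_zero] using congrArg Subtype.val hxy⟩
      rw [hdisj.eq_bot, Submodule.mem_bot, sub_eq_zero] at hx
      exact Subtype.ext hx
    · obtain ⟨w, rfl⟩ := hrange ▸ hy
      exact ⟨⟨g w, mem_range_self g w⟩, rfl⟩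
  exact (det_eq_of_comp_linearEquiv_eq (LinearEquiv.ofBijective φ hφ) (by ext; rfl)).symm

end LinearMap

section HodgeDecomposition

variable {K U V W : Type*} [Field K] [AddCommGroup U] [Module K U] [AddCommGroup V] [Module K V]
  [AddCommGroup W] [Module K W]
  {d₀ : U →ₗ[K] V} {δ₀ : V →ₗ[K] U} {d₁ : V →ₗ[K] W} {δ₁ : W →ₗ[K] V}

theorem isCompl_range_of_bijective_laplacian (hd : d₁ ∘ₗ d₀ = 0) (hδ : δ₀ ∘ₗ δ₁ = 0)
    (hL : Function.Bijective (δ₁ ∘ₗ d₁ + d₀ ∘ₗ δ₀)) : IsCompl (range d₀) (range δ₁) := by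
  constructor
  · rw [Submodule.disjoint_def]
    intro x hx₀ hx₁
    have hd₁x : d₁ x = 0 := range_le_ker_iff.2 hd hx₀
    have hδ₀x : δ₀ x = 0 := range_le_ker_iff.2 hδ hx₁
    exact hL.1 (by simp [hd₁x, hδ₀x])
  · rw [codisjoint_iff, eq_top_iff]
    rintro x -
    obtain ⟨z, rfl⟩ := hL.2 x
    rw [LinearMap.add_apply, add_comm]
    exact Submodule.add_mem_sup (mem_range_self _ _) (mem_range_self _ _)

theorem det_laplacian_eq_mul_det_restrict [FiniteDimensional K V] (hd : d₁ ∘ₗ d₀ = 0)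
    (hδ : δ₀ ∘ₗ δ₁ = 0) (hL : Function.Bijective (δ₁ ∘ₗ d₁ + d₀ ∘ₗ δ₀))
    (h₀ : ∀ x ∈ range d₀, (d₀ ∘ₗ δ₀) x ∈ range d₀) (h₁ : ∀ x ∈ range d₁, (d₁ ∘ₗ δ₁) x ∈ range d₁) :
    LinearMap.det (δ₁ ∘ₗ d₁ + d₀ ∘ₗ δ₀) =
      LinearMap.det ((d₀ ∘ₗ δ₀).restrict h₀) * LinearMap.det ((d₁ ∘ₗ δ₁).restrict h₁) := by
  have hL₀ : ∀ x ∈ range d₀, (δ₁ ∘ₗ d₁ + d₀ ∘ₗ δ₀) x = (d₀ ∘ₗ δ₀) x := fun x hx ↦ by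
    simp [mem_ker.1 (range_le_ker_iff.2 hd hx)]
  have hL₁ : ∀ x ∈ range δ₁, (δ₁ ∘ₗ d₁ + d₀ ∘ₗ δ₀) x = (δ₁ ∘ₗ d₁) x := fun x hx ↦ by
    simp [mem_ker.1 (range_le_ker_iff.2 hδ hx)]
  have hdisj : Disjoint (range δ₁) (ker d₁) := by
    rw [Submodule.disjoint_def]
    intro x hx₁ hx
    exact hL.1 (by simp [hL₁ x hx₁, mem_ker.1 hx])
  have hrange : range (d₁ ∘ₗ δ₁) = range d₁ := by
    refine le_antisymm (range_comp_le_range _ _) ?_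
    rintro _ ⟨x, rfl⟩
    obtain ⟨z, rfl⟩ := hL.2 x
    refine ⟨d₁ z, ?_⟩
    simp [← comp_apply d₁ d₀, hd]
  have hδ₁d₁ : ∀ x ∈ range δ₁, (δ₁ ∘ₗ d₁) x ∈ range δ₁ := fun x _ ↦ mem_range_self δ₁ (d₁ x)
  rw [det_eq_det_restrict_mul_det_restrict (isCompl_range_of_bijective_laplacian hd hδ hL) _
    (fun x hx ↦ hL₀ x hx ▸ h₀ x hx) (fun x hx ↦ hL₁ x hx ▸ hδ₁d₁ x hx),
    ← det_restrict_comp_range_eq hdisj hrange hδ₁d₁]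
  congr 2 <;> ext ⟨x, hx⟩
  · exact hL₀ x hx
  · exact hL₁ x hx

end HodgeDecomposition

theorem Finset.prod_range_zpow_alternating_mul_telescope {G : Type*} [CommGroupWithZero G]
    (n : ℕ) (t D : ℕ → G) (ht : ∀ j < n, t j ≠ 0) (hD : ∀ j < n, D (j + 1) = t j * t (j + 1)) :
    ∏ j ∈ Finset.range (n + 1), D j ^ ((-1 : ℤ) ^ (j + 1) * (j : ℤ)) =
      (∏ j ∈ Finset.range n, t j ^ ((-1 : ℤ) ^ j)) * t n ^ ((-1 : ℤ) ^ (n + 1) * (n : ℤ)) := by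
  induction n with
  | zero => simp
  | succ n ih =>
    rw [Finset.prod_range_succ, ih (fun j hj ↦ ht j (by omega)) (fun j hj ↦ hD j (by omega)),
      Finset.prod_range_succ, hD n (by omega), mul_zpow, mul_assoc, mul_assoc,
      ← mul_assoc (t n ^ _), ← zpow_add₀ (ht n (by omega))]
    congr 3
    push_cast
    ring

theorem torsion_product_det_laplacian_general
    (n : ℕ) (C : ℕ → Type) [∀ j, AddCommGroup (C j)] [∀ j, Module ℂ (C j)]
    [∀ j, FiniteDimensional ℂ (C j)]
    (hC : ∀ j, n < j → Subsingleton (C j))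
    (d : ∀ j, C j →ₗ[ℂ] C (j + 1)) (δ : ∀ j, C (j + 1) →ₗ[ℂ] C j)
    (hd : ∀ j, (d (j + 1)).comp (d j) = 0)
    (hδ : ∀ j, (δ j).comp (δ (j + 1)) = 0)
    (Δ : ∀ j, C j →ₗ[ℂ] C j)
    (hΔsucc : ∀ j, Δ (j + 1) = (δ (j + 1)).comp (d (j + 1)) + (d j).comp (δ j))
    (hbij : ∀ j, j ≤ n → Function.Bijective ⇑(Δ j)) :
    (∀ j, ∀ x ∈ LinearMap.range (d j), ((d j).comp (δ j)) x ∈ LinearMap.range (d j)) ∧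
    ∀ (h : ∀ j, ∀ x ∈ LinearMap.range (d j), ((d j).comp (δ j)) x ∈ LinearMap.range (d j)),
      ∏ j ∈ Finset.range (n + 1), LinearMap.det (Δ j) ^ ((-1 : ℤ) ^ (j + 1) * (j : ℤ)) =
        ∏ j ∈ Finset.range n,
          LinearMap.det (((d j).comp (δ j)).restrict (h j)) ^ ((-1 : ℤ) ^ (j + 1 + 1)) := by
  refine ⟨fun j x _ ↦ LinearMap.mem_range_self (d j) (δ j x), fun h ↦ ?_⟩
  set T : ℕ → ℂ := fun j ↦ LinearMap.det (((d j).comp (δ j)).restrict (h j))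
  have hΔT : ∀ j < n, LinearMap.det (Δ (j + 1)) = T j * T (j + 1) := fun j hj ↦ by
    have hL := hbij (j + 1) hj
    rw [hΔsucc j] at hL ⊢
    exact det_laplacian_eq_mul_det_restrict (hd j) (hδ j) hL (h j) (h (j + 1))
  have hT : ∀ j < n, T j ≠ 0 := fun j hj ↦ by
    have hdet : LinearMap.det (Δ (j + 1)) ≠ 0 :=
      (LinearMap.isUnit_det _ ((Module.End.isUnit_iff _).2 (hbij (j + 1) hj))).ne_zero
    exact left_ne_zero_of_mul (hΔT j hj ▸ hdet)
  have hTn : T n = 1 := by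
    have := hC (n + 1) n.lt_succ_self
    exact LinearMap.det_eq_one_of_subsingleton _
  rw [Finset.prod_range_zpow_alternating_mul_telescope n T _ hT hΔT, hTn, one_zpow, mul_one]
  exact Finset.prod_congr rfl fun j _ ↦ by simp [T, pow_add]

/-- Let `(C^•, d, δ)` be a finite bi-graded complex of finite-dimensional
complex vector spaces whose combinatorial Laplacian `Δ j` is bijective for `j = 0, …, n`
(here `δ j : C (j+1) →ₗ C j` is the paper's `δ_{j+1}`). Then
`∏_{j=0}^{n} det (Δ_j) ^ ((-1)^{j+1} j) = ∏_{j=1}^{n} det (d_{j-1} ∘ δ_j |_{im d_{j-1}}) ^ ((-1)^{j+1})`,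
where each composite `d_{j-1} ∘ δ_j` preserves the subspace `im d_{j-1} ⊆ C^j`.
(The right-hand product over `j = 1, …, n` is reindexed as a product over `j ∈ range n`
of the factor at degree `j + 1`, with exponent `(-1)^{(j+1)+1}`.) -/
theorem torsion_product_det_laplacian
    (n : ℕ) (C : ℕ → Type) [∀ j, AddCommGroup (C j)] [∀ j, Module ℂ (C j)]
    [∀ j, FiniteDimensional ℂ (C j)]
    (hC : ∀ j, n < j → Subsingleton (C j))
    (d : ∀ j, C j →ₗ[ℂ] C (j + 1)) (δ : ∀ j, C (j + 1) →ₗ[ℂ] C j)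
    (hd : ∀ j, (d (j + 1)).comp (d j) = 0)
    (hδ : ∀ j, (δ j).comp (δ (j + 1)) = 0)
    (Δ : ∀ j, C j →ₗ[ℂ] C j)
    (hΔ0 : Δ 0 = (δ 0).comp (d 0))
    (hΔsucc : ∀ j, Δ (j + 1) = (δ (j + 1)).comp (d (j + 1)) + (d j).comp (δ j))
    (hbij : ∀ j, j ≤ n → Function.Bijective ⇑(Δ j)) :
    (∀ j, ∀ x ∈ LinearMap.range (d j), ((d j).comp (δ j)) x ∈ LinearMap.range (d j)) ∧
    ∀ (h : ∀ j, ∀ x ∈ LinearMap.range (d j), ((d j).comp (δ j)) x ∈ LinearMap.range (d j)),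
      ∏ j ∈ Finset.range (n + 1), LinearMap.det (Δ j) ^ ((-1 : ℤ) ^ (j + 1) * (j : ℤ)) =
        ∏ j ∈ Finset.range n,
          LinearMap.det (((d j).comp (δ j)).restrict (h j)) ^ ((-1 : ℤ) ^ (j + 1 + 1)) :=
  torsion_product_det_laplacian_general n C hC d δ hd hδ Δ hΔsucc hbij
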